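/- arXiv:1304.0227 — 2 statements merged into one kernel-verified Lean document; each statement's English description precedes it below -/
import Mathlib

section
/- The topological spaces A₁* and s_* are homeomorphic. A homeomorphism q : A₁* → s_* is given coordinate-wise by y₁ = x₁ and y_{m+1} = x_{m+1}/(1 − x₁ − ⋯ − x_m) for m ≥ 1, with inverse x₁ = y₁ and x_{m+1} = y_{m+1}(1−y_m)⋯(1−y₁). -/
open scoped ZeroAtInfty
open Filter

noncomputable section

variable (K : Type*) [NontriviallyNormedField K] [IsUltrametricDist K] [CompleteSpace K]

/-- The partial sum `x_1 + ⋯ + x_m` of the first `m` coordinates of a sequence. -/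
def pSum (x : ℕ → K) (m : ℕ) : K := ∑ j ∈ Finset.range m, x j

/-- The set `A₁` of the paper: sequences `x ∈ c₀` with `sup_k |Σ_{j=1}^k x_j| = 1`,
`|1 − Σ_{j=1}^{k+1} x_j| ≤ |1 − Σ_{j=1}^k x_j|` for all `k ≥ 1`, and `Σ_{j=1}^∞ x_j = 1`. -/
def A1 : Set C₀(ℕ, K) :=
  {x | (⨆ k : ℕ, ‖pSum K (⇑x) (k + 1)‖) = 1 ∧
    (∀ k : ℕ, ‖1 - pSum K (⇑x) (k + 2)‖ ≤ ‖1 - pSum K (⇑x) (k + 1)‖) ∧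
    Tendsto (fun m => pSum K (⇑x) m) atTop (nhds 1)}

/-- The union `⋃ₙ Eⁿ` of the sets `Eⁿ = {x ∈ c₀ : x_k = 0 ∀ k > n}`,
i.e. the eventually-zero sequences. -/
def evZero : Set C₀(ℕ, K) := ⋃ n : ℕ, {x | ∀ k, n ≤ k → x k = 0}

/-- `A₁* = A₁ \ ⋃ₙ Eⁿ`, with the topology inherited from `c₀`. -/
def A1star : Set C₀(ℕ, K) := A1 K \ evZero K

/-- `s̃ = ∏_{j=1}^∞ (B \ {1})`, where `B` is the closed unit ball of `K`, with the
Tychonoff product topology. -/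
abbrev sTilde : Type _ := ℕ → ↥(Metric.closedBall (0 : K) 1 \ {1})

/-- `s_* = {y ∈ s̃ : limₘ (1−y_m)⋯(1−y₁) = 0} \ ⋃ₙ {y : y_k = 0 ∀ k > n}`. -/
def sStar : Set (sTilde K) :=
  {y | Tendsto (fun m => ∏ j ∈ Finset.range m, (1 - (y j : K))) atTop (nhds 0)} \
    ⋃ n : ℕ, {y | ∀ k, n ≤ k → (y k : K) = 0}

/-! The homeomorphism is stick-breaking. For `x ∈ A₁*` with remainders `r m = 1 - ∑_{j<m} x j`,
the fractions `y m = x m / r m` satisfy `∏_{j<m} (1 - y j) = r m`; conversely the pieces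
`x m = y m * ∏_{j<m} (1 - y j)` of `y ∈ s_*` have remainders `∏_{j<m} (1 - y j)`. Both maps are
defined and mutually inverse because the remainders never vanish: on `A₁*` the norms `‖r m‖` are
antitone from `m = 1` on, so a zero remainder would make `x` eventually zero.

Ultrametricity does the rest. It gives `‖x m‖ ≤ ‖r m‖`, i.e. `‖y m‖ ≤ 1`; it gives
`‖1 - r‖ = 1` as soon as `‖r‖ < 1`, which is the supremum condition of `A₁`; and it bounds the
whole tail `(x m)_{m ≥ N}` of the inverse image by `‖r N‖`, a continuous function of finitely
many coordinates of `y`, which makes the inverse continuous into `c₀`. -/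

open Finset Topology

namespace IsUltrametricDist

variable {R : Type*}

lemma norm_sub_le_max [SeminormedAddCommGroup R] [IsUltrametricDist R] (a b : R) :
    ‖a - b‖ ≤ max ‖a‖ ‖b‖ := by
  simpa [sub_eq_add_neg] using norm_add_le_max a (-b)

variable [SeminormedRing R] [NormOneClass R] [IsUltrametricDist R]

lemma norm_one_sub_le_one {a : R} (h : ‖a‖ ≤ 1) : ‖1 - a‖ ≤ 1 :=
  (norm_sub_le_max 1 a).trans (by simp [h])

lemma norm_one_sub_eq_one {a : R} (h : ‖a‖ < 1) : ‖1 - a‖ = 1 := by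
  rw [sub_eq_add_neg, norm_add_eq_max_of_norm_ne_norm (by simpa using h.ne'), norm_one,
    norm_neg, max_eq_left h.le]

end IsUltrametricDist

section StickBreaking

def stickPieces {R : Type*} [CommRing R] (y : ℕ → R) (m : ℕ) : R :=
  y m * ∏ j ∈ range m, (1 - y j)

def stickFractions {F : Type*} [Field F] (x : ℕ → F) (m : ℕ) : F :=
  x m / (1 - ∑ j ∈ range m, x j)

lemma sum_range_stickPieces {R : Type*} [CommRing R] (y : ℕ → R) (m : ℕ) :
    ∑ j ∈ range m, stickPieces y j = 1 - ∏ j ∈ range m, (1 - y j) := by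
  induction m with
  | zero => simp
  | succ m ih => rw [sum_range_succ, prod_range_succ, ih, stickPieces]; ring

lemma continuous_stickPieces_apply {R : Type*} [CommRing R] [TopologicalSpace R]
    [IsTopologicalRing R] (m : ℕ) : Continuous fun y : ℕ → R => stickPieces y m := by
  unfold stickPieces
  fun_prop

variable {F : Type*} [Field F] {x y : ℕ → F}

lemma prod_range_one_sub_stickFractions (hx : ∀ m, 1 - ∑ j ∈ range m, x j ≠ 0) (m : ℕ) :
    ∏ j ∈ range m, (1 - stickFractions x j) = 1 - ∑ j ∈ range m, x j := by
  induction m with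
  | zero => simp
  | succ m ih =>
    rw [prod_range_succ, ih, sum_range_succ, stickFractions]
    field_simp [hx m]
    ring

lemma stickPieces_stickFractions (hx : ∀ m, 1 - ∑ j ∈ range m, x j ≠ 0) :
    stickPieces (stickFractions x) = x := by
  ext m
  rw [stickPieces, prod_range_one_sub_stickFractions hx, stickFractions,
    div_mul_cancel₀ _ (hx m)]

lemma stickFractions_stickPieces (hy : ∀ m, ∏ j ∈ range m, (1 - y j) ≠ 0) :
    stickFractions (stickPieces y) = y := by
  ext m
  rw [stickFractions, sum_range_stickPieces, sub_sub_cancel, stickPieces,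
    mul_div_cancel_right₀ _ (hy m)]

end StickBreaking

section UnitBall

variable {𝕜 : Type*} [NormedField 𝕜] {y : ℕ → 𝕜}

lemma norm_stickPieces_le (hy : ∀ j, ‖y j‖ ≤ 1) (m : ℕ) :
    ‖stickPieces y m‖ ≤ ‖∏ j ∈ range m, (1 - y j)‖ := by
  rw [stickPieces, norm_mul]
  exact mul_le_of_le_one_left (norm_nonneg _) (hy m)

lemma antitone_norm_prod_range_one_sub [IsUltrametricDist 𝕜] (hy : ∀ j, ‖y j‖ ≤ 1) :
    Antitone fun m => ‖∏ j ∈ range m, (1 - y j)‖ := by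
  refine antitone_nat_of_succ_le fun m => ?_
  rw [prod_range_succ, norm_mul]
  exact mul_le_of_le_one_right (norm_nonneg _) (IsUltrametricDist.norm_one_sub_le_one (hy m))

end UnitBall

namespace ZeroAtInftyContinuousMap

def ofTendsto {E : Type*} [TopologicalSpace E] [Zero E] (f : ℕ → E)
    (hf : Tendsto f atTop (𝓝 0)) : C₀(ℕ, E) where
  toFun := f
  continuous_toFun := continuous_of_discreteTopology
  zero_at_infty' := by rwa [cocompact_eq_cofinite, Nat.cofinite_eq_atTop]

lemma continuous_apply {α β : Type*} [TopologicalSpace α] [PseudoMetricSpace β] [Zero β]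
    (a : α) : Continuous fun f : C₀(α, β) => f a :=
  (continuous_eval_const a : Continuous fun g : BoundedContinuousFunction α β => g a).comp
    isometry_toBCF.continuous

lemma continuous_of_continuous_apply_of_tail {X E : Type*} [TopologicalSpace X]
    [SeminormedAddCommGroup E] {f : X → C₀(ℕ, E)} (happly : ∀ m, Continuous fun x => f x m)
    (htail : ∀ x₀ (ε : ℝ), 0 < ε → ∃ N, ∀ᶠ x in 𝓝 x₀, ∀ m, N ≤ m → ‖f x m‖ ≤ ε) :
    Continuous f := by
  refine continuous_iff_continuousAt.mpr fun x₀ => Metric.tendsto_nhds.mpr fun ε hε => ?_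
  obtain ⟨N, hN⟩ := htail x₀ (ε / 4) (by positivity)
  have hhead : ∀ᶠ x in 𝓝 x₀, ∀ m ∈ range N, dist (f x m) (f x₀ m) < ε / 2 :=
    eventually_all_finset _ |>.mpr fun m _ =>
      (happly m).continuousAt.eventually (Metric.ball_mem_nhds _ (half_pos hε))
  filter_upwards [hN, hhead] with x htl hhd
  refine lt_of_le_of_lt ?_ (half_lt_self hε)
  rw [← dist_toBCF_eq_dist, BoundedContinuousFunction.dist_le (by positivity)]
  intro m
  rcases lt_or_ge m N with hm | hm
  · exact (hhd m (mem_range.mpr hm)).le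
  · calc dist (f x m) (f x₀ m) ≤ ‖f x m‖ + ‖f x₀ m‖ := by rw [dist_eq_norm]; exact norm_sub_le _ _
      _ ≤ ε / 4 + ε / 4 := add_le_add (htl m hm) (hN.self_of_nhds m hm)
      _ = ε / 2 := by ring

end ZeroAtInftyContinuousMap

section A1star

variable {𝕜 : Type*} [NontriviallyNormedField 𝕜] {x : C₀(ℕ, 𝕜)}

lemma one_sub_pSum_succ (f : ℕ → 𝕜) (m : ℕ) :
    1 - pSum 𝕜 f (m + 1) = (1 - pSum 𝕜 f m) - f m := by
  simp only [pSum, sum_range_succ]; ring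

lemma norm_pSum_succ_le_one (hx : x ∈ A1 𝕜) (k : ℕ) : ‖pSum 𝕜 x (k + 1)‖ ≤ 1 := by
  -- an unbounded family would have the junk supremum `0`, not `1`
  have hbdd : BddAbove (Set.range fun k => ‖pSum 𝕜 x (k + 1)‖) := by
    by_contra h
    exact zero_ne_one (Real.iSup_of_not_bddAbove h ▸ hx.1)
  exact hx.1 ▸ le_ciSup hbdd k

lemma antitone_norm_one_sub_pSum_succ (hx : x ∈ A1 𝕜) :
    Antitone fun k => ‖1 - pSum 𝕜 x (k + 1)‖ :=
  antitone_nat_of_succ_le hx.2.1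

lemma one_sub_pSum_ne_zero (hx : x ∈ A1star 𝕜) (m : ℕ) : 1 - pSum 𝕜 x m ≠ 0 := by
  intro h
  rcases m with _ | k
  · simp [pSum] at h
  · have hrem : ∀ n, k ≤ n → 1 - pSum 𝕜 x (n + 1) = 0 := fun n hn => by
      simpa [h] using antitone_norm_one_sub_pSum_succ hx.1 hn
    refine hx.2 (Set.mem_iUnion.mpr ⟨k + 1, fun n hn => ?_⟩)
    obtain ⟨n, rfl⟩ : ∃ n', n = n' + 1 := ⟨n - 1, by omega⟩
    have := one_sub_pSum_succ x (n + 1)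
    rw [hrem n (by omega), hrem (n + 1) (by omega)] at this
    simpa using this.symm

lemma stickFractions_ne_one (hx : x ∈ A1star 𝕜) (m : ℕ) : stickFractions x m ≠ 1 := by
  intro h
  have hxm : x m = 1 - pSum 𝕜 x m := (div_eq_one_iff_eq (one_sub_pSum_ne_zero hx m)).mp h
  exact one_sub_pSum_ne_zero hx (m + 1) (by rw [one_sub_pSum_succ, ← hxm, sub_self])

variable [IsUltrametricDist 𝕜]

lemma norm_apply_le_norm_one_sub_pSum (hx : x ∈ A1 𝕜) (m : ℕ) :
    ‖x m‖ ≤ ‖1 - pSum 𝕜 x m‖ := by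
  rcases m with _ | k
  · simpa [pSum] using norm_pSum_succ_le_one hx 0
  · have hxk : x (k + 1) = (1 - pSum 𝕜 x (k + 1)) - (1 - pSum 𝕜 x (k + 2)) := by
      rw [one_sub_pSum_succ _ (k + 1)]; ring
    rw [hxk]
    exact (IsUltrametricDist.norm_sub_le_max _ _).trans (max_le le_rfl (hx.2.1 k))

lemma norm_stickFractions_le_one (hx : x ∈ A1star 𝕜) (m : ℕ) : ‖stickFractions x m‖ ≤ 1 := by
  rw [stickFractions, norm_div]
  exact div_le_one_of_le₀ (norm_apply_le_norm_one_sub_pSum hx.1 m) (norm_nonneg _)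

lemma mem_A1_of_one_sub_pSum_eq {f : C₀(ℕ, 𝕜)} {P : ℕ → 𝕜} (hf : ∀ m, 1 - pSum 𝕜 f m = P m)
    (hanti : Antitone fun m => ‖P m‖) (hlim : Tendsto P atTop (𝓝 0)) : f ∈ A1 𝕜 := by
  have hsum (m : ℕ) : pSum 𝕜 f m = 1 - P m := by rw [← hf, sub_sub_cancel]
  have hP1 (m : ℕ) : ‖P m‖ ≤ 1 := by simpa [← hf, pSum] using hanti m.zero_le
  refine ⟨?_, fun k => by simpa only [hf] using hanti (k + 1).le_succ, ?_⟩
  · obtain ⟨k, hk⟩ :=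
      (hlim.norm.eventually_lt_const (by simp : ‖(0 : 𝕜)‖ < 1)).exists_forall_of_atTop
    refine ciSup_eq_of_forall_le_of_forall_lt_exists_gt
      (fun k => hsum (k + 1) ▸ IsUltrametricDist.norm_one_sub_le_one (hP1 _)) fun w hw => ⟨k, ?_⟩
    rwa [hsum, IsUltrametricDist.norm_one_sub_eq_one (hk (k + 1) k.le_succ)]
  · simpa only [hsum, sub_zero] using hlim.const_sub 1

end A1star

section SStar

variable {𝕜 : Type*} [NontriviallyNormedField 𝕜]

lemma sTilde.norm_le_one (y : sTilde 𝕜) (j : ℕ) : ‖(y j : 𝕜)‖ ≤ 1 := by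
  simpa using (y j).2.1

lemma sTilde.prod_range_one_sub_ne_zero (y : sTilde 𝕜) (m : ℕ) :
    ∏ j ∈ range m, (1 - (y j : 𝕜)) ≠ 0 :=
  prod_ne_zero_iff.mpr fun j _ => sub_ne_zero.mpr fun h => (y j).2.2 h.symm

lemma sTilde.continuous_coe : Continuous fun (y : sTilde 𝕜) (j : ℕ) => (y j : 𝕜) :=
  continuous_pi fun j => continuous_subtype_val.comp (continuous_apply j)

lemma tendsto_stickPieces_of_mem_sStar {y : sTilde 𝕜} (hy : y ∈ sStar 𝕜) :
    Tendsto (stickPieces fun j => (y j : 𝕜)) atTop (𝓝 0) :=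
  squeeze_zero_norm (norm_stickPieces_le (sTilde.norm_le_one y)) (by simpa using hy.1.norm)

def sStar.pieces (y : sStar 𝕜) : C₀(ℕ, 𝕜) :=
  ZeroAtInftyContinuousMap.ofTendsto _ (tendsto_stickPieces_of_mem_sStar y.2)

variable [IsUltrametricDist 𝕜]

lemma sStar.pieces_mem_A1star (y : sStar 𝕜) : sStar.pieces y ∈ A1star 𝕜 := by
  refine ⟨mem_A1_of_one_sub_pSum_eq (fun m => ?_)
    (antitone_norm_prod_range_one_sub (sTilde.norm_le_one y.1)) y.2.1, ?_⟩
  · change 1 - ∑ j ∈ range m, stickPieces (fun j => ((y : sTilde 𝕜) j : 𝕜)) j = _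
    rw [sum_range_stickPieces, sub_sub_cancel]
  · simp only [evZero, Set.mem_iUnion, not_exists]
    intro n hn
    refine y.2.2 (Set.mem_iUnion.mpr ⟨n, fun k hk => ?_⟩)
    exact (mul_eq_zero.mp (hn k hk)).resolve_right (sTilde.prod_range_one_sub_ne_zero y.1 k)

lemma sStar.continuous_pieces : Continuous (sStar.pieces (𝕜 := 𝕜)) := by
  have hcoe := sTilde.continuous_coe.comp (continuous_subtype_val (p := (· ∈ sStar 𝕜)))
  refine ZeroAtInftyContinuousMap.continuous_of_continuous_apply_of_tail
    (fun m => (continuous_stickPieces_apply m).comp hcoe) fun y₀ ε hε => ?_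
  obtain ⟨N, hN⟩ := (y₀.2.1.norm.eventually_lt_const (by simpa using hε)).exists
  have hprod : Continuous fun y : sStar 𝕜 => ‖∏ j ∈ range N, (1 - ((y : sTilde 𝕜) j : 𝕜))‖ :=
    (continuous_finsetProd _ fun j _ => continuous_const.sub ((continuous_apply j).comp hcoe)).norm
  refine ⟨N, ?_⟩
  filter_upwards [hprod.continuousAt.eventually (gt_mem_nhds hN)] with y hy m hm
  exact (norm_stickPieces_le (sTilde.norm_le_one y.1) m).trans
    ((antitone_norm_prod_range_one_sub (sTilde.norm_le_one y.1) hm).trans hy.le)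

end SStar

section Homeomorph

variable {𝕜 : Type*} [NontriviallyNormedField 𝕜] [IsUltrametricDist 𝕜]

def A1star.fractions (x : A1star 𝕜) : sTilde 𝕜 := fun m =>
  ⟨stickFractions x m, mem_closedBall_zero_iff.mpr (norm_stickFractions_le_one x.2 m),
    stickFractions_ne_one x.2 m⟩

lemma A1star.fractions_mem_sStar (x : A1star 𝕜) : A1star.fractions x ∈ sStar 𝕜 := by
  have hrem := one_sub_pSum_ne_zero x.2
  refine ⟨?_, ?_⟩
  · simpa [A1star.fractions, prod_range_one_sub_stickFractions hrem, pSum] using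
      x.2.1.2.2.const_sub (1 : 𝕜)
  · simp only [Set.mem_iUnion, not_exists]
    intro n hn
    refine x.2.2 (Set.mem_iUnion.mpr ⟨n, fun k hk => ?_⟩)
    exact (div_eq_zero_iff.mp (hn k hk)).resolve_right (hrem k)

lemma A1star.continuous_fractions : Continuous (A1star.fractions (𝕜 := 𝕜)) := by
  refine continuous_pi fun m => Continuous.subtype_mk ?_ _
  have hcoord (j : ℕ) : Continuous fun x : A1star 𝕜 => (x : C₀(ℕ, 𝕜)) j :=
    (ZeroAtInftyContinuousMap.continuous_apply j).comp continuous_subtype_val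
  exact (hcoord m).div (continuous_const.sub (continuous_finsetSum _ fun j _ => hcoord j))
    fun x => one_sub_pSum_ne_zero x.2 m

def A1starHomeomorphSStar : A1star 𝕜 ≃ₜ sStar 𝕜 where
  toFun x := ⟨A1star.fractions x, A1star.fractions_mem_sStar x⟩
  invFun y := ⟨sStar.pieces y, sStar.pieces_mem_A1star y⟩
  left_inv x := Subtype.ext <| ZeroAtInftyContinuousMap.ext fun m =>
    congrFun (stickPieces_stickFractions (one_sub_pSum_ne_zero x.2)) m
  right_inv y := Subtype.ext <| funext fun m => Subtype.ext <|
    congrFun (stickFractions_stickPieces (sTilde.prod_range_one_sub_ne_zero y.1)) m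
  continuous_toFun := A1star.continuous_fractions.subtype_mk _
  continuous_invFun := sStar.continuous_pieces.subtype_mk _

end Homeomorph

/-- The spaces `A₁*` and `s_*` are homeomorphic, and a homeomorphism
`q : A₁* → s_*` is given coordinatewise by `y₁ = x₁`,
`y_{m+1} = x_{m+1} / (1 − x₁ − ⋯ − x_m)`, with inverse given by `x₁ = y₁`,
`x_{m+1} = y_{m+1}·(1 − y_m)⋯(1 − y₁)`.  (In 0-based indexing both formulas read
uniformly as `y_m = x_m / (1 − Σ_{j<m} x_j)` and `x_m = y_m · ∏_{j<m} (1 − y_j)`.) -/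
theorem A1star_homeomorph_sStar :
    ∃ q : ↥(A1star K) ≃ₜ ↥(sStar K),
      (∀ (x : ↥(A1star K)) (m : ℕ),
        (((q x : sTilde K) m : K)) =
          (x : C₀(ℕ, K)) m / (1 - pSum K (⇑(x : C₀(ℕ, K))) m)) ∧
      (∀ (y : ↥(sStar K)) (m : ℕ),
        ((q.symm y : C₀(ℕ, K)) m) =
          ((y : sTilde K) m : K) * ∏ j ∈ Finset.range m, (1 - ((y : sTilde K) j : K))) :=
  ⟨A1starHomeomorphSStar, fun _ _ => rfl, fun _ _ => rfl⟩

end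
end

section
/- If {C_j : j ∈ ℕ} is a countable family of compact subsets of K^ℕ, then K^ℕ \ ⋃_{j=1}^∞ C_j, with the subspace topology, is homeomorphic to K^ℕ. -/
/-!
Both `K^ℕ` and the complement `U` of `⋃ j, C j` are nonempty Polish spaces (`U` is a `G_δ`) with a
basis of clopen sets, in which every compact set has empty interior: a compact set cannot contain
a cylinder, since `K` is not compact, and by Baire's theorem no nonempty open set is covered by
countably many compacts. By the Alexandrov–Urysohn theorem such spaces are homeomorphic to `ℕ^ℕ`.
For the latter, a nonempty clopen set is not totally bounded, hence splits into infinitely many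
nonempty clopen pieces of arbitrarily small diameter; iterating gives a Cantor scheme whose
induced map `ℕ^ℕ → X` is a homeomorphism.
-/

open Set Metric Topology Function Filter TopologicalSpace
open scoped ENNReal

instance IsUltrametricDist.isUltraUniformity {X : Type*} [PseudoMetricSpace X]
    [IsUltrametricDist X] : IsUltraUniformity X :=
  .mk_of_hasBasis uniformity_basis_dist
    (fun _ _ => ⟨fun _ _ h => by rwa [mem_ofPred_eq, dist_comm]⟩)
    fun _ _ => ⟨fun _ _ _ hxy hyz => (dist_triangle_max _ _ _).trans_lt (max_lt hxy hyz)⟩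

instance IsUltraUniformity.subtype {X : Type*} [UniformSpace X] [IsUltraUniformity X]
    (p : X → Prop) : IsUltraUniformity (Subtype p) :=
  .comap ‹_› Subtype.val

theorem IsCompact.interior_eq_empty_pi {ι Y : Type*} [Infinite ι] [TopologicalSpace Y]
    [NoncompactSpace Y] {S : Set (ι → Y)} (hS : IsCompact S) : interior S = ∅ := by
  classical
  refine eq_empty_iff_forall_notMem.2 fun x hx => ?_
  obtain ⟨I, u, hu, hsub⟩ := isOpen_pi_iff.1 isOpen_interior x hx
  obtain ⟨i, hi⟩ := Infinite.exists_notMem_finset I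
  have hupdate : ∀ y, update x i y ∈ S := fun y => interior_subset <| hsub fun j hj => by
    rw [update_of_ne (ne_of_mem_of_not_mem hj hi)]
    exact (hu j hj).2
  refine noncompact_univ Y (hS.image (continuous_apply i) |>.of_isClosed_subset isClosed_univ ?_)
  exact fun y _ => ⟨update x i y, hupdate y, update_self i y x⟩

theorem IsOpen.not_subset_iUnion_of_isCompact {X ι : Type*} [TopologicalSpace X] [BaireSpace X]
    [T2Space X] [Countable ι] (hint : ∀ S : Set X, IsCompact S → interior S = ∅) {W : Set X}
    (hW : IsOpen W) (hne : W.Nonempty) {D : ι → Set X} (hD : ∀ j, IsCompact (D j)) :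
    ¬ W ⊆ ⋃ j, D j := by
  have hdense : Dense (⋂ j, (D j)ᶜ) := dense_iInter_of_isOpen
    (fun j => (hD j).isClosed.isOpen_compl)
    (fun j => interior_eq_empty_iff_dense_compl.1 (hint _ (hD j)))
  obtain ⟨y, hy, hyW⟩ := hdense.exists_mem_open hW hne
  rw [← compl_iUnion] at hy
  exact fun hsub => hy (hsub hyW)

theorem IsCompact.interior_eq_empty_of_compl_iUnion {X ι : Type*} [TopologicalSpace X]
    [BaireSpace X] [T2Space X] [Countable ι] (hint : ∀ S : Set X, IsCompact S → interior S = ∅)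
    {C : ι → Set X} (hC : ∀ j, IsCompact (C j)) {S : Set ↥(⋃ j, C j)ᶜ} (hS : IsCompact S) :
    interior S = ∅ := by
  obtain ⟨W, hW, hWS⟩ := isOpen_induced_iff.1 (isOpen_interior (s := S))
  refine eq_empty_iff_forall_notMem.2 fun x hx => ?_
  have hcover : W ⊆ ⋃ o : Option ι, o.elim (Subtype.val '' S) C := by
    rw [iUnion_option]
    intro y hyW
    by_cases hy : y ∈ ⋃ j, C j
    · exact Or.inr hy
    · have : (⟨y, hy⟩ : ↥(⋃ j, C j)ᶜ) ∈ interior S := hWS ▸ hyW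
      exact Or.inl ⟨_, interior_subset this, rfl⟩
  have hxW : (x : X) ∈ W := by rwa [← mem_preimage, hWS]
  refine hW.not_subset_iUnion_of_isCompact hint ⟨x, hxW⟩ ?_ hcover
  rintro (_ | j)
  exacts [hS.image continuous_subtype_val, hC j]

theorem polishSpace_iInter_of_isOpen {X : Type*} [TopologicalSpace X] [PolishSpace X]
    {s : ℕ → Set X} (hs : ∀ n, IsOpen (s n)) : PolishSpace ↥(⋂ n, s n) := by
  have : ∀ n, PolishSpace ↥(s n) := fun n => (hs n).polishSpace
  let f : ↥(⋂ n, s n) → ∀ n, ↥(s n) := fun x n => ⟨x, mem_iInter.1 x.2 n⟩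
  have hf : IsInducing f := .of_comp (by fun_prop) ((continuous_apply 0).subtype_val)
    IsInducing.subtypeVal
  have hrange : range f = ⋂ n, {y | (y n : X) = y 0} := by
    ext y
    simp only [mem_iInter, mem_ofPred_eq]
    refine ⟨by rintro ⟨x, rfl⟩ n; rfl, fun hy => ?_⟩
    refine ⟨⟨y 0, mem_iInter.2 fun n => hy n ▸ (y n).2⟩, funext fun n => Subtype.ext (hy n).symm⟩
  refine IsClosedEmbedding.polishSpace (f := f) ⟨⟨hf, fun a b hab => ?_⟩, ?_⟩
  · exact Subtype.ext (congrArg (fun y => (y 0 : X)) hab)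
  · rw [hrange]
    exact isClosed_iInter fun n =>
      isClosed_eq (continuous_apply n).subtype_val (continuous_apply 0).subtype_val

theorem Set.Infinite.exists_reindex_nonempty {α : Type*} {P : ℕ → Set α}
    (h : {n | (P n).Nonempty}.Infinite) :
    ∃ e : ℕ → ℕ, Injective e ∧ (∀ k, (P (e k)).Nonempty) ∧ ⋃ k, P (e k) = ⋃ n, P n := by
  refine ⟨Nat.nth _, Nat.nth_injective h, Nat.nth_mem_of_infinite h, ?_⟩
  refine (iUnion_subset fun k => subset_iUnion P _).antisymm (iUnion_subset fun n x hx => ?_)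
  obtain ⟨k, hk⟩ : n ∈ range (Nat.nth fun n => (P n).Nonempty) := by
    rw [Nat.range_nth_of_infinite h]
    exact ⟨x, hx⟩
  exact mem_iUnion.2 ⟨k, hk ▸ hx⟩

section PseudoEMetric

variable {X : Type*} [PseudoEMetricSpace X]

theorem exists_seq_isClopen_subset_eball_iUnion_eq [SecondCountableTopology X]
    (hbasis : IsTopologicalBasis {s : Set X | IsClopen s}) {C : Set X} (hC : IsOpen C)
    (hne : C.Nonempty) {δ : ℝ≥0∞} (hδ : 0 < δ) :
    ∃ (B : ℕ → Set X) (c : ℕ → X),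
      (∀ n, IsClopen (B n)) ∧ (∀ n, B n ⊆ eball (c n) δ) ∧ ⋃ n, B n = C := by
  have hD : ∀ x : C, ∃ D : Set X, IsClopen D ∧ (x : X) ∈ D ∧ D ⊆ C ∩ eball (x : X) δ :=
    fun x => hbasis.exists_subset_of_mem_open ⟨x.2, mem_eball_self hδ⟩ (hC.inter isOpen_eball)
  choose D hD hxD hDC using hD
  have hUD : ⋃ x, D x = C := (iUnion_subset fun x => (hDC x).trans inter_subset_left).antisymm
    fun y hy => mem_iUnion.2 ⟨⟨y, hy⟩, hxD _⟩
  obtain ⟨T, hT, hTD⟩ := isOpen_iUnion_countable D fun x => (hD x).isOpen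
  obtain ⟨g, rfl⟩ := hT.exists_eq_range <| by
    contrapose! hne
    rw [← hUD, ← hTD, hne, biUnion_empty]
  refine ⟨fun n => D (g n), fun n => g n, fun n => hD _,
    fun n => (hDC _).trans inter_subset_right, ?_⟩
  rw [← hUD, ← hTD, biUnion_range]

theorem IsOpen.exists_isClopen_partition [SecondCountableTopology X]
    (hbasis : IsTopologicalBasis {s : Set X | IsClopen s}) {C : Set X} (hC : IsOpen C)
    (htb : ¬ TotallyBounded C) {ε : ℝ≥0∞} (hε : 0 < ε) :
    ∃ f : ℕ → Set X, (∀ n, IsClopen (f n)) ∧ (∀ n, (f n).Nonempty) ∧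
      Pairwise (Disjoint on f) ∧ ⋃ n, f n = C ∧ ∀ n, ediam (f n) ≤ ε := by
  obtain ⟨ε₀, hε₀, hnet⟩ : ∃ ε₀ > 0, ∀ t : Set X, t.Finite → ¬ C ⊆ ⋃ y ∈ t, eball y ε₀ := by
    simpa [EMetric.totallyBounded_iff] using htb
  have hne : C.Nonempty := nonempty_iff_ne_empty.2 fun h => htb (h ▸ totallyBounded_empty)
  set δ := min (ε / 2) ε₀
  obtain ⟨B, c, hB, hBc, hBC⟩ := exists_seq_isClopen_subset_eball_iUnion_eq hbasis hC hne
    (δ := δ) (lt_min (ENNReal.half_pos hε.ne') hε₀)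
  have hsub : ∀ n, disjointed B n ⊆ eball (c n) δ :=
    fun n => (disjointed_subset B n).trans (hBc n)
  -- finitely many nonempty pieces would give a finite `ε₀`-net of `C`
  have hinf : {n | (disjointed B n).Nonempty}.Infinite := by
    intro hfin
    refine hnet _ (hfin.image c) fun y hy => ?_
    rw [← hBC, ← iUnion_disjointed] at hy
    obtain ⟨n, hn⟩ := mem_iUnion.1 hy
    exact mem_biUnion (mem_image_of_mem c ⟨y, hn⟩)
      (eball_subset_eball (min_le_right _ _) (hsub n hn))
  obtain ⟨e, he, hne, hU⟩ := hinf.exists_reindex_nonempty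
  refine ⟨fun k => disjointed B (e k),
    fun k => disjointedRec (fun t i ht => ht.diff (hB i)) (hB _), hne,
    fun i j hij => disjoint_disjointed B (he.ne hij), hU.trans (iUnion_disjointed.trans hBC),
    fun k => ?_⟩
  calc ediam (disjointed B (e k)) ≤ ediam (eball (c (e k)) δ) := ediam_mono (hsub _)
    _ ≤ 2 * δ := ediam_eball_le
    _ ≤ 2 * (ε / 2) := by gcongr; exact min_le_left _ _
    _ = ε := ENNReal.mul_div_cancel two_ne_zero ENNReal.ofNat_ne_top

end PseudoEMetric

theorem exists_clopen_scheme {X : Type*} [PseudoMetricSpace X] [SecondCountableTopology X]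
    (hbasis : IsTopologicalBasis {s : Set X | IsClopen s})
    (htb : ∀ C : Set X, IsClopen C → C.Nonempty → ¬ TotallyBounded C) [Nonempty X] :
    ∃ A : List ℕ → Set X, A [] = univ ∧ (∀ l, IsClopen (A l) ∧ (A l).Nonempty) ∧
      (∀ l, ⋃ n, A (n :: l) = A l) ∧ CantorScheme.Disjoint A ∧
      CantorScheme.VanishingDiam A := by
  choose! f hf using
    fun (C : Set X) (hC : IsClopen C ∧ C.Nonempty) (ε : ℝ≥0∞) (hε : 0 < ε) =>
      hC.1.isOpen.exists_isClopen_partition hbasis (htb C hC.1 hC.2) hε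
  have hpos : ∀ n : ℕ, (0 : ℝ≥0∞) < 2⁻¹ ^ n := fun n => ENNReal.pow_pos (by norm_num) n
  let A : List ℕ → Set X := fun l => List.rec univ (fun a l s => f s (2⁻¹ ^ l.length) a) l
  have hA : ∀ l, IsClopen (A l) ∧ (A l).Nonempty := by
    intro l
    induction l with
    | nil => exact ⟨isClopen_univ, univ_nonempty⟩
    | cons a l ih =>
      obtain ⟨hclopen, hne, -⟩ := hf (A l) ih _ (hpos l.length)
      exact ⟨hclopen a, hne a⟩
  have hpart := fun l => hf (A l) (hA l) _ (hpos l.length)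
  refine ⟨A, rfl, hA, fun l => (hpart l).2.2.2.1, fun l => (hpart l).2.2.1, fun x => ?_⟩
  refine (tendsto_add_atTop_iff_nat 1).1 <| tendsto_of_tendsto_of_tendsto_of_le_of_le
    tendsto_const_nhds (ENNReal.tendsto_pow_atTop_nhds_zero_of_lt_one (r := 2⁻¹) (by norm_num))
    (fun _ => zero_le) fun n => ?_
  calc ediam (A (PiNat.res x (n + 1)))
      = ediam (f (A (PiNat.res x n)) (2⁻¹ ^ (PiNat.res x n).length) (x n)) := rfl
    _ ≤ 2⁻¹ ^ (PiNat.res x n).length := (hpart _).2.2.2.2 _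
    _ = 2⁻¹ ^ n := by rw [PiNat.res_length]

theorem PiNat.exists_forall_res {β : Type*} (p : List β → Prop) (h₀ : p [])
    (hstep : ∀ l, p l → ∃ a, p (a :: l)) : ∃ b : ℕ → β, ∀ n, p (PiNat.res b n) := by
  let L : ℕ → {l // p l} := fun n =>
    Nat.rec ⟨[], h₀⟩ (fun _ l => ⟨(hstep l.1 l.2).choose :: l.1, (hstep l.1 l.2).choose_spec⟩) n
  have hL : ∀ n, PiNat.res (fun n => (hstep (L n).1 (L n).2).choose) n = (L n).1 := by
    intro n
    induction n with
    | zero => rfl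
    | succ n ih => rw [PiNat.res_succ, ih]
  exact ⟨_, fun n => hL n ▸ (L n).2⟩

namespace CantorScheme

variable {β X : Type*} {A : List β → Set X}

theorem Disjoint.res_eq_of_mem (hdisj : CantorScheme.Disjoint A)
    (hanti : CantorScheme.Antitone A)
    {x y : ℕ → β} {z : X} : ∀ {n}, z ∈ A (PiNat.res x n) → z ∈ A (PiNat.res y n) →
      PiNat.res x n = PiNat.res y n
  | 0, _, _ => rfl
  | n + 1, hx, hy => by
    simp only [PiNat.res_succ] at hx hy ⊢
    have hres := hdisj.res_eq_of_mem hanti (hanti _ _ hx) (hanti _ _ hy)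
    rw [← hres] at hy ⊢
    by_cases hxy : x n = y n
    · rw [hxy]
    · exact (disjoint_left.1 (hdisj _ hxy) hx hy).elim

theorem nonempty_homeomorph_of_partition [MetricSpace X] [CompleteSpace X]
    {A : List ℕ → Set X}
    (hnil : A [] = univ) (hA : ∀ l, IsClopen (A l) ∧ (A l).Nonempty)
    (hcover : ∀ l, ⋃ n, A (n :: l) = A l) (hdisj : CantorScheme.Disjoint A)
    (hdiam : VanishingDiam A) : Nonempty ((ℕ → ℕ) ≃ₜ X) := by
  have hanti : CantorScheme.Antitone A := fun l a => hcover l ▸ subset_iUnion (A <| · :: l) a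
  have htotal := ClosureAntitone.map_of_vanishingDiam hdiam
    (hanti.closureAntitone fun l => (hA l).1.isClosed) fun l => (hA l).2
  let φ : (ℕ → ℕ) → X := fun b => (inducedMap A).2 ⟨b, htotal ▸ mem_univ b⟩
  have hmem : ∀ b n, φ b ∈ A (PiNat.res b n) := fun b n => map_mem _ n
  have hcont : Continuous φ := hdiam.map_continuous.comp (continuous_id.subtype_mk _)
  have hinj : Injective φ := fun b c h => congrArg Subtype.val (hdisj.map_injective h)
  have hsurj : Surjective φ := fun x => by
    obtain ⟨b, hb⟩ := PiNat.exists_forall_res (x ∈ A ·) (hnil ▸ mem_univ x)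
      fun l hl => mem_iUnion.1 ((hcover l).symm ▸ hl)
    refine ⟨b, eq_of_forall_dist_le fun ε hε => ?_⟩
    obtain ⟨n, hn⟩ := hdiam.dist_lt ε hε b
    exact (hn _ (hmem b n) x (hb n)).le
  have himage : ∀ b n, φ '' PiNat.cylinder b n = A (PiNat.res b n) := by
    intro b n
    refine subset_antisymm ?_ fun x hx => ?_
    · rintro _ ⟨c, hc, rfl⟩
      rw [PiNat.cylinder_eq_res] at hc
      exact hc ▸ hmem c n
    · obtain ⟨c, rfl⟩ := hsurj x
      refine ⟨c, ?_, rfl⟩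
      rw [PiNat.cylinder_eq_res]
      exact hdisj.res_eq_of_mem hanti (hmem c n) hx
  have hopen : IsOpenMap φ := (PiNat.isTopologicalBasis_cylinders _).isOpenMap_iff.2 <| by
    rintro _ ⟨b, n, rfl⟩
    exact himage b n ▸ (hA _).1.isOpen
  exact ⟨(Equiv.ofBijective φ ⟨hinj, hsurj⟩).toHomeomorphOfContinuousOpen hcont hopen⟩

end CantorScheme

/-- Alexandrov–Urysohn characterization of the Baire space. -/
theorem nonempty_homeomorph_nat_nat {X : Type*} [TopologicalSpace X] [PolishSpace X]
    [Nonempty X]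
    (hbasis : IsTopologicalBasis {s : Set X | IsClopen s})
    (hint : ∀ S : Set X, IsCompact S → interior S = ∅) : Nonempty ((ℕ → ℕ) ≃ₜ X) := by
  let := upgradeIsCompletelyMetrizable X
  have htb : ∀ C : Set X, IsClopen C → C.Nonempty → ¬ TotallyBounded C := by
    intro C hC hne htb
    have hempty := hint C (htb.isCompact_of_isClosed hC.isClosed)
    exact hne.ne_empty (hC.isOpen.interior_eq ▸ hempty)
  obtain ⟨A, hnil, hA, hcover, hdisj, hdiam⟩ := exists_clopen_scheme hbasis htb
  exact CantorScheme.nonempty_homeomorph_of_partition hnil hA hcover hdisj hdiam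

theorem pi_sdiff_countable_compacts_homeomorph_general (K : Type*) [NontriviallyNormedField K]
    [IsUltrametricDist K] [LocallyCompactSpace K]
    (C : ℕ → Set (ℕ → K)) (hC : ∀ j, IsCompact (C j)) :
    Nonempty (↥((⋃ j, C j)ᶜ) ≃ₜ (ℕ → K)) := by
  have : ProperSpace K := .of_locallyCompactSpace K
  have hint : ∀ S : Set (ℕ → K), IsCompact S → interior S = ∅ :=
    fun _ hS => hS.interior_eq_empty_pi
  have : PolishSpace ↥((⋃ j, C j)ᶜ) := by
    rw [compl_iUnion]
    exact polishSpace_iInter_of_isOpen fun j => (hC j).isClosed.isOpen_compl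
  obtain ⟨x, -, hx⟩ :=
    not_subset.1 (isOpen_univ.not_subset_iUnion_of_isCompact hint univ_nonempty hC)
  have : Nonempty ↥((⋃ j, C j)ᶜ) := ⟨⟨x, hx⟩⟩
  obtain ⟨e₁⟩ := nonempty_homeomorph_nat_nat (X := ℕ → K) isTopologicalBasis_clopens hint
  obtain ⟨e₂⟩ := nonempty_homeomorph_nat_nat (X := ↥((⋃ j, C j)ᶜ))
    isTopologicalBasis_clopens fun _ hS => hS.interior_eq_empty_of_compl_iUnion hint hC
  exact ⟨e₂.symm.trans e₁⟩

/-- Let `K` be a locally compact field with a complete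
non-Archimedean multiplicative norm whose value group is nontrivial.  If `{C_j}` is a
countable family of compact subsets of `K^ℕ` (with the Tychonoff product topology),
then `K^ℕ \ ⋃_j C_j`, with the subspace topology, is homeomorphic to `K^ℕ`. -/
theorem pi_sdiff_countable_compacts_homeomorph (K : Type*) [NontriviallyNormedField K]
    [IsUltrametricDist K] [CompleteSpace K] [LocallyCompactSpace K]
    (C : ℕ → Set (ℕ → K)) (hC : ∀ j, IsCompact (C j)) :
    Nonempty (↥((⋃ j, C j)ᶜ) ≃ₜ (ℕ → K)) :=
  pi_sdiff_countable_compacts_homeomorph_general K C hC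
end
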